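/- The Euclidean projection onto the OWL ball G_ε = {x : Ω_w(x) ≤ ε} satisfies proj_{G_ε}(v) = sign(v) ⊙ (P(|v|)^T proj_{G_ε}(|v|_↓)), where P(|v|) sorts |v| in non-increasing order. -/

import Mathlib

/-!
The OWL ball `K = {x | Ω_w(x) ≤ ε}` is convex and depends only on the multiset of the `|x i|`;
moreover shrinking coordinates in absolute value keeps a point in `K`. Hence
`r := sign(v) ⊙ (q ∘ σ⁻¹)` lies in `K`, and
`‖r - v‖ ≤ ‖q - |v ∘ σ|‖ ≤ ‖|p ∘ σ| - |v ∘ σ|‖ ≤ ‖p - v‖`,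
where the middle step uses that `|p ∘ σ| ∈ K` and `q` is the projection of `|v ∘ σ|`.
Since the nearest point of a convex set is unique in Euclidean space, `p = r`.
-/

open Finset

/-- The vector of absolute values of x, sorted in non-increasing order. -/
noncomputable def absSorted {n : ℕ} (x : Fin n → ℝ) : Fin n → ℝ :=
  fun i => |x (Tuple.sort (fun j => -|x j|) i)|

/-- The ordered weighted l1 norm Omega_w(x). -/
noncomputable def owl {n : ℕ} (w x : Fin n → ℝ) : ℝ := ∑ i, w i * absSorted x i

theorem IsMinOn.eq_of_norm_sub_le {E : Type*} [NormedAddCommGroup E] [NormedSpace ℝ E]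
    [StrictConvexSpace ℝ E] {K : Set E} {v p r : E} (hmin : IsMinOn (fun x => ‖x - v‖) K p)
    (hK : Convex ℝ K) (hp : p ∈ K) (hr : r ∈ K) (hle : ‖r - v‖ ≤ ‖p - v‖) : r = p := by
  by_contra hne
  have heq : ‖r - v‖ = ‖p - v‖ := hle.antisymm (hmin hr)
  have hmid : (1 / 2 : ℝ) • r + (1 / 2 : ℝ) • p ∈ K :=
    hK hr hp (by norm_num) (by norm_num) (by norm_num)
  have hlt : ‖(1 / 2 : ℝ) • ((r - v) + (p - v))‖ < ‖r - v‖ :=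
    (norm_midpoint_lt_iff heq).2 fun h => hne (sub_left_injective h)
  have hsplit : (1 / 2 : ℝ) • ((r - v) + (p - v)) = ((1 / 2 : ℝ) • r + (1 / 2 : ℝ) • p) - v := by
    module
  rw [hsplit, heq] at hlt
  exact hlt.not_ge (hmin hmid)

theorem IsMinOn.eq_of_sum_sq_sub_le {ι : Type*} [Fintype ι] {K : Set (ι → ℝ)} {v p r : ι → ℝ}
    (hmin : IsMinOn (fun x => ∑ i, (x i - v i) ^ 2) K p) (hK : Convex ℝ K) (hp : p ∈ K)
    (hr : r ∈ K) (hle : ∑ i, (r i - v i) ^ 2 ≤ ∑ i, (p i - v i) ^ 2) : r = p := by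
  let e := (WithLp.linearEquiv 2 ℝ (ι → ℝ)).symm
  have hsq : ∀ x, ∑ i, (x i - v i) ^ 2 = ‖e x - e v‖ ^ 2 := fun x => by
    simp [e, EuclideanSpace.real_norm_sq_eq]
  have hsq_le {x y : ι → ℝ} : ∑ i, (x i - v i) ^ 2 ≤ ∑ i, (y i - v i) ^ 2 →
      ‖e x - e v‖ ≤ ‖e y - e v‖ := by
    rw [hsq, hsq]
    exact (pow_le_pow_iff_left₀ (norm_nonneg _) (norm_nonneg _) two_ne_zero).1
  refine e.injective (IsMinOn.eq_of_norm_sub_le ?_ (hK.linear_image e.toLinearMap)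
    (Set.mem_image_of_mem e hp) (Set.mem_image_of_mem e hr) (hsq_le hle))
  rintro _ ⟨x, hx, rfl⟩
  exact hsq_le (hmin hx)

namespace Real

theorem sq_sign_mul_sub_le (a b : ℝ) : (Real.sign a * b - a) ^ 2 ≤ (b - |a|) ^ 2 := by
  rcases lt_trichotomy a 0 with ha | rfl | ha
  · rw [sign_of_neg ha, abs_of_neg ha]; nlinarith
  · simpa using sq_nonneg b
  · rw [sign_of_pos ha, abs_of_pos ha, one_mul]

theorem abs_sign_mul_le (a b : ℝ) : |Real.sign a * b| ≤ |b| := by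
  rw [abs_mul]
  rcases sign_apply_eq a with h | h | h <;> simp [h]

end Real

section Owl

variable {n : ℕ}

theorem antitone_absSorted (x : Fin n → ℝ) : Antitone (absSorted x) := fun _ _ hij => by
  simpa [absSorted] using Tuple.monotone_sort (fun j => -|x j|) hij

theorem absSorted_comp_perm (x : Fin n → ℝ) (π : Equiv.Perm (Fin n)) :
    absSorted (fun i => x (π i)) = absSorted x := by
  funext i
  simpa [absSorted, Function.comp_def] using
    congrFun (Tuple.comp_perm_comp_sort_eq_comp_sort (f := fun j => -|x j|) (σ := π)) i

theorem absSorted_abs (x : Fin n → ℝ) : absSorted (fun i => |x i|) = absSorted x := by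
  unfold absSorted
  simp only [abs_abs]

theorem owl_comp_perm (w x : Fin n → ℝ) (π : Equiv.Perm (Fin n)) :
    owl w (fun i => x (π i)) = owl w x := by
  rw [owl, owl, absSorted_comp_perm]

theorem owl_abs (w x : Fin n → ℝ) : owl w (fun i => |x i|) = owl w x := by
  rw [owl, owl, absSorted_abs]

theorem sum_mul_abs_comp_perm_le_owl {w : Fin n → ℝ} (hw : Antitone w) (x : Fin n → ℝ)
    (π : Equiv.Perm (Fin n)) : ∑ i, w i * |x (π i)| ≤ owl w x := by
  have hmv : Monovary w (absSorted x) := fun i j hij =>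
    hw (not_lt.1 fun hji => hij.not_ge (antitone_absSorted x hji.le))
  set s := Tuple.sort (fun j => -|x j|)
  calc ∑ i, w i * |x (π i)| = ∑ i, w i * absSorted x ((π.trans s.symm) i) := by
        simp [absSorted, s]
    _ ≤ owl w x := hmv.sum_mul_comp_perm_le_sum_mul

theorem owl_le_owl_of_abs_le {w : Fin n → ℝ} (hw : Antitone w) (hw₀ : ∀ i, 0 ≤ w i)
    {x y : Fin n → ℝ} (h : ∀ i, |x i| ≤ |y i|) : owl w x ≤ owl w y :=
  calc owl w x = ∑ i, w i * |x (Tuple.sort (fun j => -|x j|) i)| := rfl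
    _ ≤ ∑ i, w i * |y (Tuple.sort (fun j => -|x j|) i)| :=
        sum_le_sum fun i _ => mul_le_mul_of_nonneg_left (h _) (hw₀ i)
    _ ≤ owl w y := sum_mul_abs_comp_perm_le_owl hw y _

theorem convexOn_owl {w : Fin n → ℝ} (hw : Antitone w) (hw₀ : ∀ i, 0 ≤ w i) :
    ConvexOn ℝ Set.univ (owl w) := by
  refine ⟨convex_univ, fun x _ y _ a b ha hb hab => ?_⟩
  set s := Tuple.sort (fun j => -|(a • x + b • y) j|)
  calc owl w (a • x + b • y) = ∑ i, w i * |a * x (s i) + b * y (s i)| := rfl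
    _ ≤ ∑ i, w i * (a * |x (s i)| + b * |y (s i)|) := by
        gcongr with i
        · exact hw₀ i
        · calc |a * x (s i) + b * y (s i)| ≤ |a * x (s i)| + |b * y (s i)| := abs_add_le _ _
            _ = a * |x (s i)| + b * |y (s i)| := by
              rw [abs_mul, abs_mul, abs_of_nonneg ha, abs_of_nonneg hb]
    _ = a * ∑ i, w i * |x (s i)| + b * ∑ i, w i * |y (s i)| := by
        rw [mul_sum, mul_sum, ← sum_add_distrib]
        exact sum_congr rfl fun i _ => by ring
    _ ≤ a • owl w x + b • owl w y := by
        simp only [smul_eq_mul]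
        gcongr
        · exact sum_mul_abs_comp_perm_le_owl hw x s
        · exact sum_mul_abs_comp_perm_le_owl hw y s

end Owl

theorem owl_ball_proj_sort_general {n : ℕ} (w : Fin n → ℝ) (hmono : Antitone w)
    (hnonneg : ∀ i, 0 ≤ w i) (ε : ℝ)
    (v p q : Fin n → ℝ) (σ : Equiv.Perm (Fin n))
    (hp : owl w p ≤ ε ∧ ∀ x, owl w x ≤ ε → ∑ i, (p i - v i) ^ 2 ≤ ∑ i, (x i - v i) ^ 2)
    (hq : owl w q ≤ ε ∧ ∀ x, owl w x ≤ ε →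
      ∑ i, (q i - |v (σ i)|) ^ 2 ≤ ∑ i, (x i - |v (σ i)|) ^ 2) :
    p = fun i => Real.sign (v i) * q (σ.symm i) := by
  set r : Fin n → ℝ := fun i => Real.sign (v i) * q (σ.symm i)
  have hr : owl w r ≤ ε :=
    calc owl w r ≤ owl w (fun i => q (σ.symm i)) :=
          owl_le_owl_of_abs_le hmono hnonneg fun i => Real.abs_sign_mul_le _ _
      _ = owl w q := owl_comp_perm w q σ.symm
      _ ≤ ε := hq.1
  have habs_p : owl w (fun i => |p (σ i)|) ≤ ε := by
    rw [owl_comp_perm w (fun i => |p i|), owl_abs]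
    exact hp.1
  have hrv : ∑ i, (r i - v i) ^ 2 ≤ ∑ i, (p i - v i) ^ 2 :=
    calc ∑ i, (r i - v i) ^ 2 = ∑ i, (r (σ i) - v (σ i)) ^ 2 := (Equiv.sum_comp σ _).symm
      _ ≤ ∑ i, (q i - |v (σ i)|) ^ 2 :=
          sum_le_sum fun i _ => by simpa [r] using Real.sq_sign_mul_sub_le (v (σ i)) (q i)
      _ ≤ ∑ i, (|p (σ i)| - |v (σ i)|) ^ 2 := hq.2 _ habs_p
      _ ≤ ∑ i, (p (σ i) - v (σ i)) ^ 2 :=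
          sum_le_sum fun i _ => sq_le_sq.2 (abs_abs_sub_abs_le_abs_sub _ _)
      _ = ∑ i, (p i - v i) ^ 2 := Equiv.sum_comp σ fun i => (p i - v i) ^ 2
  exact (IsMinOn.eq_of_sum_sq_sub_le (fun x hx => hp.2 x hx.2)
    ((convexOn_owl hmono hnonneg).convex_le ε) ⟨trivial, hp.1⟩ ⟨trivial, hr⟩ hrv).symm

/-- The Euclidean projection onto the OWL ball of radius ε commutes with signs and
sorting: proj(v) = sign(v) ⊙ P(|v|)ᵀ proj(|v|↓). -/
theorem owl_ball_proj_sort {n : ℕ} (w : Fin n → ℝ) (hmono : Antitone w)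
    (hnonneg : ∀ i, 0 ≤ w i) (hne : w ≠ 0) (ε : ℝ) (hε : 0 < ε)
    (v p q : Fin n → ℝ) (σ : Equiv.Perm (Fin n))
    (hσ : Antitone fun i => |v (σ i)|)
    (hp : owl w p ≤ ε ∧ ∀ x, owl w x ≤ ε → ∑ i, (p i - v i) ^ 2 ≤ ∑ i, (x i - v i) ^ 2)
    (hq : owl w q ≤ ε ∧ ∀ x, owl w x ≤ ε →
      ∑ i, (q i - |v (σ i)|) ^ 2 ≤ ∑ i, (x i - |v (σ i)|) ^ 2) :
    p = fun i => Real.sign (v i) * q (σ.symm i) :=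
  owl_ball_proj_sort_general w hmono hnonneg ε v p q σ hp hq
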